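/- Let W : F_q → O be a DMC, G an l×l non-singular matrix over F_q, and for n ≥ 1 let W_n be the channel on F_q^{l^n} defined by W_n(y₁^N | u₁^N) = Π_{k=1}^N W(y_k | (u G_n)_k) with G_n = B_n G^{⊗n} (B_n the bit-reversal permutation) and split channels W_n^{(i)}. Then for 1 ≤ i ≤ l^{n−1} and 1 ≤ j ≤ l, the channel (W_{n−1}^{(i)})₁^{(j)} (one polarization step with kernel G applied to W_{n−1}^{(i)}) is equivalent to W_n^{((i−1)l+j)}: there is a bijection between output alphabets carrying one transition kernel to the other, so I and Z coincide. -/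

import Mathlib

/-- The `k`-th base-`l` digit of `i : Fin (l^n)`. -/
def digitF (l n : ℕ) [NeZero l] (i : Fin (l ^ n)) (k : Fin n) : Fin l :=
  ⟨(i.val / l ^ (k : ℕ)) % l, Nat.mod_lt _ (Nat.pos_of_ne_zero (NeZero.ne l))⟩

/-- The polarization matrix `G_n = B_n G^{⊗n}` (bit-reversal times Kronecker power):
`(G_n)_{i,j} = Π_k G_{d_{n−1−k}(i), d_k(j)}` where `d_k` is the `k`-th base-`l` digit. -/
def GnMat {Fq : Type*} [Field Fq] {l : ℕ} [NeZero l]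
    (G : Matrix (Fin l) (Fin l) Fq) (n : ℕ) :
    Matrix (Fin (l ^ n)) (Fin (l ^ n)) Fq :=
  fun u v => ∏ k : Fin n, G (digitF l n u k.rev) (digitF l n v k)

open scoped Classical in
/-- The `i`-th split channel of one polarization step with an `N × N` kernel `M`. -/
noncomputable def splitCh {Fq O : Type*} [Field Fq] [Fintype Fq] {N : ℕ}
    (W : Fq → O → ℝ) (M : Matrix (Fin N) (Fin N) Fq) (i : Fin N) :
    Fq → ((Fin N → O) × (Fin i → Fq)) → ℝ :=
  fun ui yu =>
    (1 / (Fintype.card Fq : ℝ) ^ (N - 1)) *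
      ∑ u : Fin N → Fq,
        if u i = ui ∧ ∀ j : Fin i, u (Fin.castLE i.isLt.le j) = yu.2 j then
          ∏ k, W (∑ r, u r * M r k) (yu.1 k)
        else 0

/-!
Index the inputs of `G_{n+1}` as `a * l + b` and its outputs as `m * l ^ n + c`. Then
`G_{n+1}[a l + b, m l^n + c] = G_n[a, c] * G[b, m]`, so the `m`-th output block of `U G_{n+1}` is
`u_m G_n` for the word `u_m a = (U[a l + ·] G)_m`; since `G` is invertible, `U ↦ (u_m)_m` is a
bijection. Expanding the product of the `l` inner split channels turns the two-level channel into
one sum over `(u_m)_m`, in which the outer input is forced to be `(u_m i)_m G⁻¹ = U[i l + ·]`.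
Knowing the first `k = i l + j` symbols of `U` is the same as knowing `U[i l + ·]` below `j` and the
prefixes below `i` of all the `u_m`, and this regrouping is the bijection of output alphabets.
-/

namespace PolarCode

open Matrix

noncomputable section

variable {l : ℕ}

def rowIdx (l n : ℕ) : Fin (l ^ n) × Fin l ≃ Fin (l ^ (n + 1)) :=
  finProdFinEquiv.trans (finCongr (pow_succ l n).symm)

def colIdx (l n : ℕ) : Fin l × Fin (l ^ n) ≃ Fin (l ^ (n + 1)) :=
  finProdFinEquiv.trans (finCongr (pow_succ' l n).symm)

def prefixIdx {i j k : ℕ} (hk : k = i * l + j) : (Fin i × Fin l) ⊕ Fin j ≃ Fin k :=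
  (finProdFinEquiv.sumCongr (Equiv.refl _)).trans (finSumFinEquiv.trans (finCongr hk.symm))

@[simp] theorem val_rowIdx {n : ℕ} (a : Fin (l ^ n)) (b : Fin l) :
    (rowIdx l n (a, b) : ℕ) = b + l * a := rfl

@[simp] theorem val_colIdx {n : ℕ} (m : Fin l) (c : Fin (l ^ n)) :
    (colIdx l n (m, c) : ℕ) = c + l ^ n * m := rfl

@[simp] theorem val_prefixIdx_inr {i j k : ℕ} (hk : k = i * l + j) (b : Fin j) :
    (prefixIdx hk (.inr b) : ℕ) = i * l + b := rfl

section VecMulEquiv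

variable {R : Type*} [CommRing R] {ι : Type*} [Fintype ι] [DecidableEq ι] {G : Matrix ι ι R}

def vecMulEquiv (hG : IsUnit G.det) : (ι → R) ≃ (ι → R) where
  toFun x := x ᵥ* G
  invFun x := x ᵥ* G⁻¹
  left_inv x := by simp [vecMul_vecMul, mul_nonsing_inv _ hG]
  right_inv x := by simp [vecMul_vecMul, nonsing_inv_mul _ hG]

@[simp] theorem vecMulEquiv_apply (hG : IsUnit G.det) (x : ι → R) :
    vecMulEquiv hG x = x ᵥ* G := rfl

def rowsVecMulEquiv (α : Type*) (hG : IsUnit G.det) : (α → ι → R) ≃ (ι → α → R) :=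
  (Equiv.piCongrRight fun _ => vecMulEquiv hG).trans (Equiv.piComm _)

end VecMulEquiv

section Alphabets

variable {Fq : Type*} [Field Fq] {G : Matrix (Fin l) (Fin l) Fq}

def blockEquiv (n : ℕ) (hG : IsUnit G.det) :
    (Fin (l ^ (n + 1)) → Fq) ≃ (Fin l → Fin (l ^ n) → Fq) :=
  ((rowIdx l n).symm.arrowCongr (Equiv.refl Fq)).trans
    ((Equiv.curry _ _ _).trans (rowsVecMulEquiv _ hG))

@[simp] theorem blockEquiv_apply {n : ℕ} (hG : IsUnit G.det) (U : Fin (l ^ (n + 1)) → Fq)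
    (m : Fin l) (a : Fin (l ^ n)) :
    blockEquiv n hG U m a = ((fun b => U (rowIdx l n (a, b))) ᵥ* G) m := rfl

def prefixEquiv {i j k : ℕ} (hG : IsUnit G.det) (hk : k = i * l + j) :
    (Fin k → Fq) ≃ (Fin l → Fin i → Fq) × (Fin j → Fq) :=
  ((prefixIdx hk).symm.arrowCongr (Equiv.refl Fq)).trans
    ((Equiv.sumArrowEquivProdArrow _ _ _).trans
      (((Equiv.curry _ _ _).trans (rowsVecMulEquiv _ hG)).prodCongr (Equiv.refl _)))

@[simp] theorem prefixEquiv_apply {i j k : ℕ} (hG : IsUnit G.det) (hk : k = i * l + j)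
    (p : Fin k → Fq) :
    prefixEquiv hG hk p = (fun m a => ((fun b => p (prefixIdx hk (.inl (a, b)))) ᵥ* G) m,
      fun b => p (prefixIdx hk (.inr b))) := rfl

theorem prefixEquiv_take {n : ℕ} (hG : IsUnit G.det) {i : Fin (l ^ n)} {j : Fin l}
    {k : Fin (l ^ (n + 1))} (hk : (k : ℕ) = i * l + j) (U : Fin (l ^ (n + 1)) → Fq) :
    prefixEquiv hG hk (Fin.take k k.isLt.le U)
      = (fun m => Fin.take i i.isLt.le (blockEquiv n hG U m),
        Fin.take j j.isLt.le fun b => U (rowIdx l n (i, b))) := by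
  ext m a <;> simp only [prefixEquiv_apply, blockEquiv_apply, Fin.take_apply]
  · rfl
  · congr 1; ext; simp only [Fin.val_castLE, val_rowIdx, val_prefixIdx_inr]; ring

theorem vecMulEquiv_symm_blockEquiv {n : ℕ} (hG : IsUnit G.det) (U : Fin (l ^ (n + 1)) → Fq)
    (a : Fin (l ^ n)) :
    (vecMulEquiv hG).symm (fun m => blockEquiv n hG U m a) = fun b => U (rowIdx l n (a, b)) :=
  (Equiv.symm_apply_eq _).mpr rfl

theorem apply_eq_and_take_eq_iff {n : ℕ} (hG : IsUnit G.det) {i : Fin (l ^ n)} {j : Fin l}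
    {k : Fin (l ^ (n + 1))} (hk : (k : ℕ) = i * l + j) (U : Fin (l ^ (n + 1)) → Fq) (x : Fq)
    (p : Fin k → Fq) :
    (U k = x ∧ Fin.take k k.isLt.le U = p) ↔
      (U (rowIdx l n (i, j)) = x ∧
        Fin.take j j.isLt.le (fun b => U (rowIdx l n (i, b))) = (prefixEquiv hG hk p).2) ∧
      ∀ m, Fin.take i i.isLt.le (blockEquiv n hG U m) = (prefixEquiv hG hk p).1 m := by
  have hkij : rowIdx l n (i, j) = k := Fin.ext (by simp [hk, mul_comm, add_comm])
  rw [hkij, ← (prefixEquiv hG hk).apply_eq_iff_eq, prefixEquiv_take, Prod.ext_iff, funext_iff]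
  tauto

def outputEquiv {O : Type*} (n : ℕ) (hG : IsUnit G.det) {i : Fin (l ^ n)} {j : Fin l}
    {k : Fin (l ^ (n + 1))} (hk : (k : ℕ) = i * l + j) :
    ((Fin (l ^ (n + 1)) → O) × (Fin k → Fq)) ≃
      ((Fin l → (Fin (l ^ n) → O) × (Fin i → Fq)) × (Fin j → Fq)) :=
  ((((colIdx l n).symm.arrowCongr (Equiv.refl O)).trans (Equiv.curry _ _ _)).prodCongr
    (prefixEquiv hG hk)).trans
    ((Equiv.prodAssoc _ _ _).symm.trans
      ((Equiv.arrowProdEquivProdArrow _ _ _).symm.prodCongr (Equiv.refl _)))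

@[simp] theorem outputEquiv_apply {O : Type*} {n : ℕ} (hG : IsUnit G.det) {i : Fin (l ^ n)}
    {j : Fin l} {k : Fin (l ^ (n + 1))} (hk : (k : ℕ) = i * l + j) (y : Fin (l ^ (n + 1)) → O)
    (p : Fin k → Fq) :
    outputEquiv n hG hk (y, p)
      = (fun m => (fun c => y (colIdx l n (m, c)), (prefixEquiv hG hk p).1 m),
        (prefixEquiv hG hk p).2) := rfl

end Alphabets

section GnMat

variable [NeZero l]

theorem digitF_rowIdx_succ {n : ℕ} (a : Fin (l ^ n)) (b : Fin l) (s : Fin n) :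
    digitF l (n + 1) (rowIdx l n (a, b)) s.succ = digitF l n a s := by
  ext
  simp only [digitF, val_rowIdx, Fin.val_succ, pow_succ', ← Nat.div_div_eq_div_mul,
    Nat.add_mul_div_left _ _ (NeZero.pos l), Nat.div_eq_of_lt b.isLt, zero_add]

theorem digitF_rowIdx_zero {n : ℕ} (a : Fin (l ^ n)) (b : Fin l) :
    digitF l (n + 1) (rowIdx l n (a, b)) 0 = b := by
  ext
  simp [digitF, Nat.mod_eq_of_lt b.isLt]

theorem digitF_colIdx_castSucc {n : ℕ} (m : Fin l) (c : Fin (l ^ n)) (t : Fin n) :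
    digitF l (n + 1) (colIdx l n (m, c)) t.castSucc = digitF l n c t := by
  ext
  obtain ⟨d, hd⟩ : ∃ d, n = t + 1 + d := ⟨n - (t + 1), by omega⟩
  have : l ^ n * m = l ^ (t : ℕ) * (l * (l ^ d * m)) := by
    rw [show l ^ n = l ^ (t + 1 + d) from congrArg _ hd]; ring
  simp only [digitF, val_colIdx, Fin.val_castSucc, this,
    Nat.add_mul_div_left _ _ (pow_pos (NeZero.pos l) _), Nat.add_mul_mod_self_left]

theorem digitF_colIdx_last {n : ℕ} (m : Fin l) (c : Fin (l ^ n)) :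
    digitF l (n + 1) (colIdx l n (m, c)) (Fin.last n) = m := by
  ext
  simp [digitF, Nat.add_mul_div_left _ _ (pow_pos (NeZero.pos l) _), Nat.div_eq_of_lt c.isLt,
    Nat.mod_eq_of_lt m.isLt]

variable {Fq : Type*} [Field Fq] (G : Matrix (Fin l) (Fin l) Fq)

theorem GnMat_succ_rowIdx_colIdx {n : ℕ} (a : Fin (l ^ n)) (b : Fin l) (m : Fin l)
    (c : Fin (l ^ n)) :
    GnMat G (n + 1) (rowIdx l n (a, b)) (colIdx l n (m, c)) = GnMat G n a c * G b m := by
  simp only [GnMat, Fin.prod_univ_castSucc, Fin.rev_castSucc, Fin.rev_last, digitF_rowIdx_succ,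
    digitF_rowIdx_zero, digitF_colIdx_castSucc, digitF_colIdx_last]

theorem vecMul_GnMat_succ_colIdx {n : ℕ} (U : Fin (l ^ (n + 1)) → Fq) (m : Fin l)
    (c : Fin (l ^ n)) :
    (U ᵥ* GnMat G (n + 1)) (colIdx l n (m, c))
      = ((fun a => ((fun b => U (rowIdx l n (a, b))) ᵥ* G) m) ᵥ* GnMat G n) c := by
  simp only [vecMul, dotProduct, ← (rowIdx l n).sum_comp, Fintype.sum_prod_type,
    GnMat_succ_rowIdx_colIdx, Finset.sum_mul]
  exact Finset.sum_congr rfl fun a _ => Finset.sum_congr rfl fun b _ => by ring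

theorem prod_vecMul_GnMat_succ {O : Type*} {n : ℕ} (hG : IsUnit G.det) (W : Fq → O → ℝ)
    (U : Fin (l ^ (n + 1)) → Fq) (y : Fin (l ^ (n + 1)) → O) :
    ∏ K, W ((U ᵥ* GnMat G (n + 1)) K) (y K)
      = ∏ m, ∏ c, W ((blockEquiv n hG U m ᵥ* GnMat G n) c) (y (colIdx l n (m, c))) := by
  rw [← (colIdx l n).prod_comp, Fintype.prod_prod_type]
  simp only [vecMul_GnMat_succ_colIdx]
  rfl

end GnMat

section Channels

theorem prod_mul_sum_ite {R ι κ : Type*} [CommSemiring R] [Fintype ι] [DecidableEq ι] [Fintype κ]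
    (c : R) (P : ι → κ → Prop) [∀ m, DecidablePred (P m)] (f : ι → κ → R) :
    ∏ m, c * ∑ u, (if P m u then f m u else 0)
      = c ^ Fintype.card ι * ∑ u : ι → κ, if ∀ m, P m (u m) then ∏ m, f m (u m) else 0 := by
  rw [Finset.prod_mul_distrib, Finset.prod_const, Finset.card_univ, Fintype.prod_sum]
  simp only [Fintype.prod_ite_zero]

theorem sum_ite_and_apply_eq {R α β : Type*} [AddCommMonoid R] [Fintype α] [DecidableEq α]
    [DecidableEq β] (e : α ≃ β) (t : β) (P : α → Prop) [DecidablePred P] (c : R) :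
    ∑ w, (if P w ∧ e w = t then c else 0) = if P (e.symm t) then c else 0 := by
  simp only [← e.eq_symm_apply, and_comm (a := P _), ite_and, Fintype.sum_ite_eq']

-- `splitCh` decides its conditions classically; the statements below must use the same instances.
open scoped Classical

variable {Fq O : Type*} [Field Fq] [Fintype Fq]

theorem splitCh_apply {N : ℕ} (W : Fq → O → ℝ) (M : Matrix (Fin N) (Fin N) Fq) (i : Fin N)
    (x : Fq) (yu : (Fin N → O) × (Fin i → Fq)) :
    splitCh W M i x yu = 1 / (Fintype.card Fq : ℝ) ^ (N - 1) *
      ∑ u : Fin N → Fq, if u i = x ∧ Fin.take i i.isLt.le u = yu.2 then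
        ∏ c, W ((u ᵥ* M) c) (yu.1 c) else 0 := by
  simp only [splitCh, funext_iff, Fin.take_apply]
  rfl

theorem splitCh_splitCh {N : ℕ} (W : Fq → O → ℝ) (A : Matrix (Fin N) (Fin N) Fq)
    {G : Matrix (Fin l) (Fin l) Fq} (hG : IsUnit G.det) (i : Fin N) (j : Fin l) (x : Fq)
    (z : Fin l → (Fin N → O) × (Fin i → Fq)) (v : Fin j → Fq) :
    splitCh (splitCh W A i) G j x (z, v) =
      1 / (Fintype.card Fq : ℝ) ^ (l - 1) * (1 / (Fintype.card Fq : ℝ) ^ (N - 1)) ^ l *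
        ∑ u : Fin l → Fin N → Fq,
          if ((vecMulEquiv hG).symm (fun m => u m i) j = x ∧
              Fin.take j j.isLt.le ((vecMulEquiv hG).symm (fun m => u m i)) = v) ∧
            ∀ m, Fin.take i i.isLt.le (u m) = (z m).2 then
            ∏ m, ∏ c, W ((u m ᵥ* A) c) ((z m).1 c)
          else 0 := by
  simp only [splitCh_apply, prod_mul_sum_ite, Fintype.card_fin, ← mul_ite_zero,
    Finset.ite_sum_zero, ← ite_and, ← Finset.mul_sum, mul_assoc]
  rw [Finset.sum_comm]
  congr 2
  refine Finset.sum_congr rfl fun u _ => ?_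
  rw [← sum_ite_and_apply_eq (vecMulEquiv hG) (fun m => u m i)
    (fun w => (w j = x ∧ Fin.take j j.isLt.le w = v) ∧ ∀ m, Fin.take i i.isLt.le (u m) = (z m).2)
    (∏ m, ∏ c, W ((u m ᵥ* A) c) ((z m).1 c))]
  refine Finset.sum_congr rfl fun w _ => ?_
  congr 1
  simp only [forall_and, funext_iff, vecMulEquiv_apply, eq_comm (a := u _ i)]
  exact propext (by tauto)

end Channels

end

end PolarCode

open PolarCode

theorem splitCh_recursive_general
    {Fq O : Type*} [Field Fq] [Fintype Fq] {l : ℕ} [NeZero l]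
    (W : Fq → O → ℝ)
    (G : Matrix (Fin l) (Fin l) Fq) (hG : IsUnit G.det)
    (n : ℕ) (i : Fin (l ^ n)) (j : Fin l)
    (k : Fin (l ^ (n + 1))) (hk : (k : ℕ) = (i : ℕ) * l + (j : ℕ)) :
    ∃ e : ((Fin (l ^ (n + 1)) → O) × (Fin k → Fq)) ≃
        ((Fin l → ((Fin (l ^ n) → O) × (Fin i → Fq))) × (Fin j → Fq)),
      ∀ x o, splitCh W (GnMat G (n + 1)) k x o =
        splitCh (splitCh W (GnMat G n) i) G j x (e o) := by
  classical
  refine ⟨outputEquiv n hG hk, fun x ⟨y, p⟩ => ?_⟩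
  have normalizer : 1 / (Fintype.card Fq : ℝ) ^ (l - 1) *
      (1 / (Fintype.card Fq : ℝ) ^ (l ^ n - 1)) ^ l
      = 1 / (Fintype.card Fq : ℝ) ^ (l ^ (n + 1) - 1) := by
    have : l - 1 + (l ^ n - 1) * l = l ^ (n + 1) - 1 := by
      have : 1 * l ≤ l ^ n * l := Nat.mul_le_mul_right _ (Nat.one_le_pow n l (NeZero.pos l))
      have := NeZero.pos l
      rw [Nat.sub_mul, pow_succ]
      omega
    rw [div_pow, one_pow, ← pow_mul, div_mul_div_comm, one_mul, ← pow_add, this]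
  rw [outputEquiv_apply, splitCh_splitCh _ _ hG, normalizer, splitCh_apply,
    ← (blockEquiv n hG).sum_comp]
  congr 1
  refine Finset.sum_congr rfl fun U _ => ?_
  simp only [vecMulEquiv_symm_blockEquiv, ← prod_vecMul_GnMat_succ]
  congr 1
  exact propext (apply_eq_and_take_eq_iff hG hk U x p)

/-- recursive structure of the split channels. For `1 ≤ i ≤ l^n`,
`1 ≤ j ≤ l` (here 0-based), the channel `(W_n^{(i)})₁^{(j)}` — one polarization step
with kernel `G` applied to the split channel `W_n^{(i)}` — is equivalent to
`W_{n+1}^{((i−1)l+j)}`: there is a bijection of output alphabets carrying one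
transition kernel to the other (hence `I` and `Z` coincide). -/
theorem splitCh_recursive
    {Fq O : Type*} [Field Fq] [Fintype Fq] [Fintype O] {l : ℕ} [NeZero l]
    (W : Fq → O → ℝ)
    (hW0 : ∀ x y, 0 ≤ W x y) (hW1 : ∀ x, ∑ y, W x y = 1)
    (G : Matrix (Fin l) (Fin l) Fq) (hG : IsUnit G.det)
    (n : ℕ) (i : Fin (l ^ n)) (j : Fin l)
    (k : Fin (l ^ (n + 1))) (hk : (k : ℕ) = (i : ℕ) * l + (j : ℕ)) :
    ∃ e : ((Fin (l ^ (n + 1)) → O) × (Fin k → Fq)) ≃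
        ((Fin l → ((Fin (l ^ n) → O) × (Fin i → Fq))) × (Fin j → Fq)),
      ∀ x o, splitCh W (GnMat G (n + 1)) k x o =
        splitCh (splitCh W (GnMat G n) i) G j x (e o) :=
  splitCh_recursive_general W G hG n i j k hk
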